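/- Let τ = (τ, A, a) be a primitive substitution with fixed point X, and let u be a non-empty prefix of X. Then the derived sequence D_u(X) is the fixed point of a primitive substitution τ_u on the alphabet R_u of return-word symbols, and τ_u is the unique morphism satisfying Θ_u ∘ τ_u = τ ∘ Θ_u. -/

import Mathlib

namespace Cobham

open Filter

variable {A : Type*} {B : Type*}

/-- The factor `X_i X_{i+1} ... X_{i+n-1}` of the sequence `X`. -/
def word (X : ℕ → A) (i n : ℕ) : List A := (List.range n).map fun k => X (i + k)

/-- `u` occurs in `X` at position `i`. -/
def OccursAt (X : ℕ → A) (u : List A) (i : ℕ) : Prop := word X i u.length = u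

def IsFactor (X : ℕ → A) (u : List A) : Prop := ∃ i, OccursAt X u i

def IsPrefix (X : ℕ → A) (u : List A) : Prop := OccursAt X u 0

/-- Uniformly recurrent: gaps between successive occurrences of any factor are bounded. -/
def UnifRec (X : ℕ → A) : Prop :=
  ∀ u, IsFactor X u → ∃ g : ℕ, ∀ i : ℕ, ∃ j, i ≤ j ∧ j ≤ i + g ∧ OccursAt X u j

/-- Return words on `u`: factors between two successive occurrences of `u` in `X`. -/
def ReturnWords (X : ℕ → A) (u : List A) : Set (List A) :=
  { v | ∃ i j, OccursAt X u i ∧ OccursAt X u j ∧ i < j ∧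
      (∀ k, i < k → k < j → ¬ OccursAt X u k) ∧ v = word X i (j - i) }

/-- Application of a morphism to a word, by concatenation. -/
def wordApply (σ : A → List B) (w : List A) : List B := w.flatMap σ

/-- Iterate of a morphism. -/
def mPow (σ : A → List A) : ℕ → A → List A
  | 0 => fun a => [a]
  | k + 1 => fun a => wordApply σ (mPow σ k a)

def Nonerasing (σ : A → List A) : Prop := ∀ a, σ a ≠ []

/-- Primitivity: some power of the morphism maps every letter to a word
containing every letter. -/
def Primitive (σ : A → List A) : Prop := ∃ k, 0 < k ∧ ∀ a b : A, b ∈ mPow σ k a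

/-- Primitivity restricted to a set of letters. -/
def PrimitiveOn (σ : A → List A) (S : Set A) : Prop :=
  ∃ k, 0 < k ∧ ∀ a ∈ S, ∀ b ∈ S, b ∈ mPow σ k a

/-- `X` is a fixed point of `σ`: the image of every prefix of `X` is a prefix of `X`. -/
def IsFixedPt (σ : A → List A) (X : ℕ → A) : Prop :=
  ∀ n, OccursAt X (wordApply σ (word X 0 n)) 0

def UltPeriodic (X : ℕ → A) : Prop :=
  ∃ N p : ℕ, 0 < p ∧ ∀ n, N ≤ n → X (n + p) = X n

def Periodic (X : ℕ → A) : Prop := ∃ p : ℕ, 0 < p ∧ ∀ n, X (n + p) = X n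

/-- `u` occurs at position `i` inside the word `w`. -/
def WOcc (u w : List A) (i : ℕ) : Prop :=
  i + u.length ≤ w.length ∧ (w.drop i).take u.length = u

/-- `D` is the derived sequence of `X` on `u`: a sequence of return words on `u`
whose concatenation is `X`. -/
def IsDerived (X : ℕ → A) (u : List A) (D : ℕ → List A) : Prop :=
  (∀ n, D n ∈ ReturnWords X u) ∧ ∀ n, OccursAt X ((word D 0 n).flatten) 0

/-- `τu` is the return substitution of `τ` on `u` (on the alphabet of return words):
`Θ_u ∘ τ_u = τ ∘ Θ_u`. -/
def RetSub (τ : A → List A) (X : ℕ → A) (u : List A)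
    (τu : List A → List (List A)) : Prop :=
  ∀ r ∈ ReturnWords X u,
    (∀ s ∈ τu r, s ∈ ReturnWords X u) ∧ (τu r).flatten = wordApply τ r

/-- Eigenvalue of a complex matrix. -/
def IsEig {n : Type*} [Fintype n] (M : Matrix n n ℂ) (μ : ℂ) : Prop :=
  ∃ v : n → ℂ, v ≠ 0 ∧ M.mulVec v = μ • v

/-- Incidence matrix of a morphism, as a complex matrix. -/
def incMat [Fintype A] [DecidableEq A] (σ : A → List A) : Matrix A A ℂ :=
  Matrix.of fun i j => (((σ j).count i : ℕ) : ℂ)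

/-- Incidence matrix of a return substitution, indexed by the set of return words. -/
def retMat [DecidableEq A] (τu : List A → List (List A)) (S : Set (List A))
    [Fintype S] : Matrix S S ℂ :=
  Matrix.of fun i j => (((τu (j : List A)).count (i : List A) : ℕ) : ℂ)

/-- `α` is the dominant eigenvalue of the incidence matrix of `σ`. -/
def IsDomEig [Fintype A] [DecidableEq A] (σ : A → List A) (α : ℝ) : Prop :=
  IsEig (incMat σ) (α : ℂ) ∧ ∀ μ : ℂ, IsEig (incMat σ) μ → ‖μ‖ ≤ α

/-- `X` is `α`-substitutive: the image under a letter-to-letter morphism of the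
fixed point of a primitive substitution with dominant eigenvalue `α`. -/
def IsSubstitutiveWith {A : Type*} (α : ℝ) (X : ℕ → A) : Prop :=
  ∃ (C : Type) (hF : Fintype C) (hD : DecidableEq C) (σ : C → List C) (c : C)
    (Y : ℕ → C) (ψ : C → A),
    Nonerasing σ ∧ (σ c).head? = some c ∧ Primitive σ ∧
    Y 0 = c ∧ IsFixedPt σ Y ∧ (∀ n, X n = ψ (Y n)) ∧ @IsDomEig C hF hD σ α

/-- Perron number: a real algebraic integer `α ≥ 1` strictly dominating the
absolute values of its other conjugates. -/
def IsPerron (α : ℝ) : Prop :=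
  1 ≤ α ∧ IsIntegral ℤ α ∧
    ∀ β : ℂ, Polynomial.aeval β (minpoly ℤ α) = 0 → β ≠ (α : ℂ) → ‖β‖ < α

/-!
The occurrences of `u` in `X` are enumerated increasingly; the words between consecutive
occurrences are the return words, and they are recognizable: a list of return words followed
by `u` that occurs at an occurrence of `u` is the corresponding segment of the derived
sequence. Since `τ u` begins with `u`, the image of a return word followed by `u` again occurs
at an occurrence of `u`, and its unique decomposition into return words defines `τ_u`. The same
uniqueness gives the uniqueness of `τ_u`, of the derived sequence, and its fixed-point property.

For primitivity, `X` is uniformly recurrent, so there are finitely many return words. Once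
`τ^m a` contains every `s u` with `s` a return word, every `τ_u^m r` contains every `s`, since
each return word `r` begins with `a`. If instead `τ a = a`, the alphabet is `{a}` and there is a
single return word.
-/

section Words

variable {X : ℕ → A} {i j n : ℕ} {v w : List A}

@[simp] lemma word_length (X : ℕ → A) (i n : ℕ) : (word X i n).length = n := by
  simp [word]

@[simp] lemma word_zero (X : ℕ → A) (i : ℕ) : word X i 0 = [] := rfl

lemma word_append (X : ℕ → A) (i m n : ℕ) :
    word X i (m + n) = word X i m ++ word X (i + m) n := by
  simp [word, List.range_add, Nat.add_assoc]

lemma word_one (X : ℕ → A) (i : ℕ) : word X i 1 = [X i] := rfl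

lemma word_cons (X : ℕ → A) (i n : ℕ) : word X i (n + 1) = X i :: word X (i + 1) n := by
  rw [Nat.add_comm, word_append, word_one]; rfl

lemma word_append_sub (X : ℕ → A) {i j k : ℕ} (hij : i ≤ j) (hjk : j ≤ k) :
    word X i (j - i) ++ word X j (k - j) = word X i (k - i) := by
  obtain ⟨a, rfl⟩ := Nat.exists_eq_add_of_le hij
  obtain ⟨b, rfl⟩ := Nat.exists_eq_add_of_le hjk
  simp only [Nat.add_sub_cancel_left, Nat.add_sub_add_left, Nat.add_assoc, word_append]

lemma word_eq_word_iff {Y : ℕ → A} :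
    word X i n = word Y j n ↔ ∀ t < n, X (i + t) = Y (j + t) := by
  simp [word, List.ext_getElem_iff]

lemma mem_word {b : A} : b ∈ word X i n ↔ ∃ t < n, X (i + t) = b := by
  simp [word]

lemma occursAt_word (X : ℕ → A) (i n : ℕ) : OccursAt X (word X i n) i := by
  simp [OccursAt]

lemma occursAt_append_iff :
    OccursAt X (v ++ w) i ↔ OccursAt X v i ∧ OccursAt X w (i + v.length) := by
  unfold OccursAt
  rw [List.length_append, word_append]
  exact ⟨fun h => List.append_inj h (by simp), fun ⟨h₁, h₂⟩ => by rw [h₁, h₂]⟩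

lemma occursAt_word_append (hij : i ≤ j) (hv : OccursAt X v j) :
    OccursAt X (word X i (j - i) ++ v) i :=
  occursAt_append_iff.2 ⟨occursAt_word X i _, by rwa [word_length, Nat.add_sub_cancel' hij]⟩

lemma OccursAt.of_prefix (h : OccursAt X w i) (hvw : v <+: w) : OccursAt X v i := by
  obtain ⟨t, rfl⟩ := hvw
  exact (occursAt_append_iff.1 h).1

lemma OccursAt.of_infix (h : OccursAt X w i) (hvw : v <:+: w) :
    ∃ q, q + v.length ≤ w.length ∧ OccursAt X v (i + q) := by
  obtain ⟨s, t, rfl⟩ := hvw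
  exact ⟨s.length, by simp, (occursAt_append_iff.1 (occursAt_append_iff.1 h).1).2⟩

lemma prefix_of_occursAt (hv : OccursAt X v i) (hw : OccursAt X w i)
    (hvw : v.length ≤ w.length) : v <+: w := by
  obtain ⟨c, hc⟩ := Nat.exists_eq_add_of_le hvw
  rw [← hv, ← hw, hc, word_append]
  exact List.prefix_append _ _

lemma infix_of_occursAt (hw : OccursAt X w i) (hv : OccursAt X v 0)
    (h : i + w.length ≤ v.length) : w <:+: v := by
  have hpre : word X 0 (i + w.length) <+: v :=
    prefix_of_occursAt (occursAt_word X 0 _) hv (by simpa using h)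
  refine List.IsInfix.trans ?_ hpre.isInfix
  rw [word_append, Nat.zero_add, hw]
  exact ⟨word X 0 i, [], by simp⟩

lemma occursAt_add_iff_of_word_eq {p L q : ℕ} (h : word X p L = word X i L)
    (hq : q + v.length ≤ L) : OccursAt X v (p + q) ↔ OccursAt X v (i + q) := by
  have hpt := word_eq_word_iff.1 h
  have heq : word X (p + q) v.length = word X (i + q) v.length :=
    word_eq_word_iff.2 fun t ht => by simpa [Nat.add_assoc] using hpt (q + t) (by omega)
  rw [OccursAt, OccursAt, heq]

lemma eq_of_length_eq_of_subsingleton [Subsingleton A] {v w : List A}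
    (h : v.length = w.length) : v = w :=
  List.ext_getElem h fun _ _ _ => Subsingleton.elim _ _

end Words

section Morphisms

variable {X : ℕ → A} {σ : A → List A} {i : ℕ} {u w : List A}

@[simp] lemma wordApply_nil (σ : A → List B) : wordApply σ [] = [] := rfl

lemma wordApply_cons (σ : A → List B) (b : A) (w : List A) :
    wordApply σ (b :: w) = σ b ++ wordApply σ w := rfl

lemma wordApply_append (σ : A → List B) (v w : List A) :
    wordApply σ (v ++ w) = wordApply σ v ++ wordApply σ w := by
  simp [wordApply]

@[simp] lemma wordApply_singleton (σ : A → List B) (b : A) : wordApply σ [b] = σ b := by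
  simp [wordApply]

lemma wordApply_comp (σ : B → List A) (ρ : A → List B) (w : List A) :
    wordApply σ (wordApply ρ w) = wordApply (fun b => wordApply σ (ρ b)) w := by
  simp [wordApply, List.flatMap_assoc]

lemma infix_wordApply_of_mem (σ : A → List B) {b : A} (hb : b ∈ w) : σ b <:+: wordApply σ w := by
  obtain ⟨s, t, rfl⟩ := List.append_of_mem hb
  exact ⟨wordApply σ s, wordApply σ t, by simp [wordApply_append, wordApply_cons]⟩

lemma length_le_length_wordApply (hσ : Nonerasing σ) (w : List A) :
    w.length ≤ (wordApply σ w).length := by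
  induction w with
  | nil => simp
  | cons b w ih =>
    have := List.length_pos_iff.2 (hσ b)
    simp only [wordApply_cons, List.length_append, List.length_cons]
    omega

lemma wordApply_ne_nil (hσ : Nonerasing σ) (hw : w ≠ []) : wordApply σ w ≠ [] := by
  obtain ⟨b, w, rfl⟩ := List.exists_cons_of_ne_nil hw
  simp [wordApply_cons, hσ b]

lemma mPow_succ (σ : A → List A) (k : ℕ) (b : A) :
    mPow σ (k + 1) b = wordApply σ (mPow σ k b) := rfl

lemma mPow_one (σ : A → List A) (b : A) : mPow σ 1 b = σ b := wordApply_singleton σ b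

lemma wordApply_mPow_zero (σ : A → List A) (w : List A) : wordApply (mPow σ 0) w = w := by
  simp [wordApply, mPow]

lemma wordApply_mPow_succ (σ : A → List A) (k : ℕ) (w : List A) :
    wordApply (mPow σ (k + 1)) w = wordApply σ (wordApply (mPow σ k) w) := by
  rw [wordApply_comp]
  rfl

lemma mPow_add (σ : A → List A) (m k : ℕ) (b : A) :
    mPow σ (m + k) b = wordApply (mPow σ m) (mPow σ k b) := by
  induction m with
  | zero => rw [Nat.zero_add, wordApply_mPow_zero]
  | succ m ih => rw [Nat.add_right_comm, mPow_succ, ih, wordApply_mPow_succ]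

lemma nonerasing_mPow (hσ : Nonerasing σ) (k : ℕ) : Nonerasing (mPow σ k) := by
  induction k with
  | zero => intro b; simp [mPow]
  | succ k ih => intro b; exact wordApply_ne_nil hσ (ih b)

lemma IsFixedPt.occursAt_zero (hσ : IsFixedPt σ X) (hw : OccursAt X w 0) :
    OccursAt X (wordApply σ w) 0 := by
  simpa only [show word X 0 w.length = w from hw] using hσ w.length

lemma isFixedPt_mPow (hσ : IsFixedPt σ X) (k : ℕ) : IsFixedPt (mPow σ k) X := by
  suffices h : ∀ w, OccursAt X w 0 → OccursAt X (wordApply (mPow σ k) w) 0 from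
    fun n => h _ (occursAt_word X 0 n)
  induction k with
  | zero => intro w hw; rwa [wordApply_mPow_zero]
  | succ k ih =>
    intro w hw
    rw [wordApply_mPow_succ]
    exact hσ.occursAt_zero (ih w hw)

lemma IsFixedPt.occursAt_wordApply (hσ : IsFixedPt σ X) (h : OccursAt X w i) :
    OccursAt X (wordApply σ w) (wordApply σ (word X 0 i)).length := by
  have hpre : OccursAt X (word X 0 i ++ w) 0 :=
    occursAt_append_iff.2 ⟨occursAt_word X 0 i, by simpa using h⟩
  have := hσ.occursAt_zero hpre
  rw [wordApply_append] at this
  simpa using (occursAt_append_iff.1 this).2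

lemma prefix_wordApply_self (hσ : IsFixedPt σ X) (hne : Nonerasing σ) (hu : IsPrefix X u) :
    u <+: wordApply σ u :=
  prefix_of_occursAt hu (hσ.occursAt_zero hu) (length_le_length_wordApply hne u)

lemma IsFixedPt.occursAt_wordApply_append (hσ : IsFixedPt σ X) (hu : u <+: wordApply σ u)
    (h : OccursAt X (w ++ u) i) :
    OccursAt X (wordApply σ w ++ u) (wordApply σ (word X 0 i)).length := by
  have := hσ.occursAt_wordApply h
  rw [wordApply_append] at this
  exact this.of_prefix ((List.prefix_append_right_inj _).2 hu)

lemma occursAt_mPow {a : A} (hσ : IsFixedPt σ X) (hX0 : X 0 = a) (m : ℕ) :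
    OccursAt X (mPow σ m a) 0 := by
  have h := (isFixedPt_mPow hσ m).occursAt_zero (w := [a]) (by simp [OccursAt, word, hX0])
  rwa [wordApply_singleton] at h

end Morphisms

section ReturnWords

variable {X : ℕ → A} {u r : List A} {l : List (List A)}

lemma ne_nil_of_mem_returnWords (hr : r ∈ ReturnWords X u) : r ≠ [] := by
  obtain ⟨i, j, -, -, hij, -, rfl⟩ := hr
  exact List.ne_nil_of_length_pos (by simpa using hij)

lemma exists_occursAt_append_of_mem_returnWords (hr : r ∈ ReturnWords X u) :
    ∃ i, OccursAt X u i ∧ OccursAt X (r ++ u) i := by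
  obtain ⟨i, j, hi, hj, hij, -, rfl⟩ := hr
  exact ⟨i, hi, occursAt_word_append hij.le hj⟩

lemma prefix_append_of_mem_returnWords (hr : r ∈ ReturnWords X u) : u <+: r ++ u := by
  obtain ⟨i, hi, hri⟩ := exists_occursAt_append_of_mem_returnWords hr
  exact prefix_of_occursAt hi hri (by simp)

lemma prefix_append_of_prefix {w : List A} (hr : u <+: r ++ u) (hw : u <+: w) :
    u <+: r ++ w := by
  rcases le_total u.length r.length with h | h
  · exact (List.prefix_of_prefix_length_le hr (List.prefix_append r u) h).trans
      (List.prefix_append r w)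
  · obtain ⟨t, rfl⟩ := List.prefix_of_prefix_length_le (List.prefix_append r _) hr h
    rw [List.prefix_append_right_inj] at hr ⊢
    exact hr.trans hw

lemma prefix_flatten_append (hl : ∀ r ∈ l, r ∈ ReturnWords X u) : u <+: l.flatten ++ u := by
  induction l with
  | nil => simp
  | cons r l ih =>
    rw [List.flatten_cons, List.append_assoc]
    exact prefix_append_of_prefix (prefix_append_of_mem_returnWords (hl r (by simp)))
      (ih fun s hs => hl s (by simp [hs]))

lemma head_mem_of_mem_returnWords (hu : u ≠ []) (hpre : IsPrefix X u)
    (hr : r ∈ ReturnWords X u) : X 0 ∈ r := by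
  obtain ⟨i, j, hi, -, hij, -, rfl⟩ := hr
  have hXi : X (i + 0) = X (0 + 0) :=
    word_eq_word_iff.1 (hi.trans hpre.symm) 0 (List.length_pos_iff.2 hu)
  exact mem_word.2 ⟨0, by omega, by simpa using hXi⟩

lemma mem_returnWords_of_mem_word {D : ℕ → List A} {m c : ℕ}
    (hD : ∀ n, D n ∈ ReturnWords X u) (hr : r ∈ word D m c) : r ∈ ReturnWords X u := by
  obtain ⟨t, -, rfl⟩ := mem_word.1 hr
  exact hD _

lemma length_le_length_flatten (hl : ∀ r ∈ l, r ≠ []) : l.length ≤ l.flatten.length := by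
  induction l with
  | nil => simp
  | cons r l ih =>
    have := List.length_pos_iff.2 (hl r (by simp))
    have := ih fun s hs => hl s (by simp [hs])
    simp only [List.flatten_cons, List.length_append, List.length_cons]
    omega

end ReturnWords

noncomputable def occPos (X : ℕ → A) (u : List A) : ℕ → ℕ := Nat.nth (OccursAt X u)

noncomputable def derivedSeq (X : ℕ → A) (u : List A) (n : ℕ) : List A :=
  word X (occPos X u n) (occPos X u (n + 1) - occPos X u n)

section Derived

variable {X : ℕ → A} {u r : List A} {l l' : List (List A)} {i j k m n p : ℕ}
  {D : ℕ → List A}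

lemma occursAt_occPos (hinf : (Set.ofPred (OccursAt X u)).Infinite) (n : ℕ) :
    OccursAt X u (occPos X u n) :=
  Nat.nth_mem_of_infinite hinf n

lemma occPos_strictMono (hinf : (Set.ofPred (OccursAt X u)).Infinite) :
    StrictMono (occPos X u) :=
  Nat.nth_strictMono hinf

lemma occPos_zero (hpre : IsPrefix X u) : occPos X u 0 = 0 :=
  Nat.nth_zero_of_zero hpre

lemma exists_occPos_eq (h : OccursAt X u i) : ∃ n, occPos X u n = i :=
  Nat.subset_range_nth h

lemma not_occursAt_of_lt_occPos_succ (h₁ : occPos X u n < k) (h₂ : k < occPos X u (n + 1)) :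
    ¬ OccursAt X u k :=
  fun hk => (Nat.le_nth_of_lt_nth_succ h₂ hk).not_gt h₁

lemma occPos_succ_eq (hinf : (Set.ofPred (OccursAt X u)).Infinite) (hj : OccursAt X u j)
    (hnj : occPos X u n < j) (hgap : ∀ k, occPos X u n < k → k < j → ¬ OccursAt X u k) :
    occPos X u (n + 1) = j := by
  refine le_antisymm (not_lt.1 fun h => not_occursAt_of_lt_occPos_succ hnj h hj)
    (not_lt.1 fun h => hgap _ ?_ h (occursAt_occPos hinf _))
  exact occPos_strictMono hinf n.lt_succ_self

lemma derivedSeq_mem_returnWords (hinf : (Set.ofPred (OccursAt X u)).Infinite) (n : ℕ) :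
    derivedSeq X u n ∈ ReturnWords X u :=
  ⟨_, _, occursAt_occPos hinf n, occursAt_occPos hinf (n + 1),
    occPos_strictMono hinf n.lt_succ_self, fun _ => not_occursAt_of_lt_occPos_succ, rfl⟩

lemma flatten_word_derivedSeq (hinf : (Set.ofPred (OccursAt X u)).Infinite) (m c : ℕ) :
    (word (derivedSeq X u) m c).flatten
      = word X (occPos X u m) (occPos X u (m + c) - occPos X u m) := by
  have hmono := (occPos_strictMono hinf).monotone
  induction c with
  | zero => simp
  | succ c ih =>
    rw [word_append, word_one, List.flatten_append, ih, List.flatten_singleton, derivedSeq,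
      word_append_sub X (hmono (by omega)) (hmono (by omega)), Nat.add_assoc]

lemma isDerived_derivedSeq (hinf : (Set.ofPred (OccursAt X u)).Infinite) (hpre : IsPrefix X u) :
    IsDerived X u (derivedSeq X u) := by
  refine ⟨derivedSeq_mem_returnWords hinf, fun n => ?_⟩
  rw [flatten_word_derivedSeq hinf, occPos_zero hpre]
  exact occursAt_word X 0 _

lemma exists_derivedSeq_eq_of_occursAt (hinf : (Set.ofPred (OccursAt X u)).Infinite)
    (hr : r ∈ ReturnWords X u) (h : OccursAt X (r ++ u) p) :
    ∃ n, occPos X u n = p ∧ derivedSeq X u n = r := by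
  obtain ⟨i, j, hi, hj, hij, hgap, rfl⟩ := hr
  have hw := h.trans (occursAt_word_append hij.le hj).symm
  simp only [List.length_append, word_length] at hw
  have transfer : ∀ q, q ≤ j - i → (OccursAt X u (p + q) ↔ OccursAt X u (i + q)) :=
    fun q hq => occursAt_add_iff_of_word_eq hw (by omega)
  obtain ⟨n, rfl⟩ := exists_occPos_eq ((transfer 0 (Nat.zero_le _)).2 hi)
  have hsucc : occPos X u (n + 1) = occPos X u n + (j - i) := by
    refine occPos_succ_eq hinf ((transfer _ le_rfl).2 (by rwa [Nat.add_sub_cancel' hij.le]))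
      (by omega) fun k h₁ h₂ hk => hgap (i + (k - occPos X u n)) (by omega) (by omega) ?_
    exact (transfer _ (by omega)).1 (by rwa [Nat.add_sub_cancel' h₁.le])
  refine ⟨n, rfl, ?_⟩
  rw [derivedSeq, hsucc, Nat.add_sub_cancel_left]
  exact word_eq_word_iff.2 fun t ht => word_eq_word_iff.1 hw t (by omega)

lemma eq_word_derivedSeq (hinf : (Set.ofPred (OccursAt X u)).Infinite)
    (hl : ∀ r ∈ l, r ∈ ReturnWords X u) (h : OccursAt X (l.flatten ++ u) (occPos X u m)) :
    l = word (derivedSeq X u) m l.length := by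
  induction l generalizing m with
  | nil => rfl
  | cons r t ih =>
    have ht : ∀ s ∈ t, s ∈ ReturnWords X u := fun s hs => hl s (by simp [hs])
    rw [List.flatten_cons, List.append_assoc, occursAt_append_iff] at h
    have hru : OccursAt X (r ++ u) (occPos X u m) :=
      occursAt_append_iff.2 ⟨h.1, h.2.of_prefix (prefix_flatten_append ht)⟩
    obtain ⟨n, hn, rfl⟩ := exists_derivedSeq_eq_of_occursAt hinf (hl r (by simp)) hru
    obtain rfl := (occPos_strictMono hinf).injective hn
    have hlt := occPos_strictMono hinf n.lt_succ_self
    rw [derivedSeq, word_length, Nat.add_sub_cancel' hlt.le] at h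
    rw [List.length_cons, word_cons]
    exact congrArg _ (ih ht h.2)

lemma length_flatten_word_derivedSeq (hinf : (Set.ofPred (OccursAt X u)).Infinite) (m c : ℕ) :
    (word (derivedSeq X u) m c).flatten.length = occPos X u (m + c) - occPos X u m := by
  rw [flatten_word_derivedSeq hinf, word_length]

lemma exists_flatten_eq (hinf : (Set.ofPred (OccursAt X u)).Infinite) {w : List A}
    (hi : OccursAt X u i) (h : OccursAt X (w ++ u) i) :
    ∃ l : List (List A), (∀ r ∈ l, r ∈ ReturnWords X u) ∧ l.flatten = w := by
  obtain ⟨m, rfl⟩ := exists_occPos_eq hi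
  obtain ⟨m', hm'⟩ := exists_occPos_eq (occursAt_append_iff.1 h).2
  have hmm' : m ≤ m' := (occPos_strictMono hinf).le_iff_le.1 (by omega)
  refine ⟨word (derivedSeq X u) m (m' - m),
    fun r => mem_returnWords_of_mem_word (derivedSeq_mem_returnWords hinf), ?_⟩
  rw [flatten_word_derivedSeq hinf, Nat.add_sub_cancel' hmm', hm', Nat.add_sub_cancel_left]
  exact (occursAt_append_iff.1 h).1

lemma eq_of_flatten_eq (hinf : (Set.ofPred (OccursAt X u)).Infinite)
    (hl : ∀ r ∈ l, r ∈ ReturnWords X u) (hl' : ∀ r ∈ l', r ∈ ReturnWords X u)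
    (heq : l.flatten = l'.flatten) (hi : OccursAt X u i) (h : OccursAt X (l.flatten ++ u) i) :
    l = l' := by
  obtain ⟨m, rfl⟩ := exists_occPos_eq hi
  have e := eq_word_derivedSeq hinf hl h
  have e' := eq_word_derivedSeq hinf hl' (heq ▸ h)
  have hmono := (occPos_strictMono hinf).monotone
  have hlen : occPos X u (m + l.length) = occPos X u (m + l'.length) := by
    have h₁ := congrArg (·.flatten.length) e
    have h₂ := congrArg (·.flatten.length) e'
    simp only [length_flatten_word_derivedSeq hinf, heq] at h₁ h₂
    have := hmono (Nat.le_add_right m l.length)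
    have := hmono (Nat.le_add_right m l'.length)
    omega
  rw [e, e', Nat.add_left_cancel ((occPos_strictMono hinf).injective hlen)]

lemma eq_derivedSeq_of_isDerived (hinf : (Set.ofPred (OccursAt X u)).Infinite)
    (hpre : IsPrefix X u) (hD : IsDerived X u D) : D = derivedSeq X u := by
  have hmem : ∀ m c, ∀ r ∈ word D m c, r ∈ ReturnWords X u := fun _ _ _ =>
    mem_returnWords_of_mem_word hD.1
  -- the next `u.length` return words spell a word of length `≥ u.length` that begins with `u`
  have hocc : ∀ n, OccursAt X ((word D 0 n).flatten ++ u) 0 := fun n => by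
    have h := hD.2 (n + u.length)
    rw [word_append, Nat.zero_add, List.flatten_append, occursAt_append_iff] at h
    have hlen : u.length ≤ (word D n u.length).flatten.length := by
      simpa using length_le_length_flatten fun r hr => ne_nil_of_mem_returnWords (hmem _ _ r hr)
    have hu := List.prefix_of_prefix_length_le (prefix_flatten_append (hmem _ _))
      (List.prefix_append _ _) hlen
    exact occursAt_append_iff.2 ⟨h.1, h.2.of_prefix hu⟩
  funext n
  have e := eq_word_derivedSeq hinf (hmem 0 (n + 1)) (by rw [occPos_zero hpre]; exact hocc (n + 1))
  rw [word_length] at e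
  simpa using word_eq_word_iff.1 e n n.lt_succ_self

end Derived

section ReturnSubstitution

variable {τ σ : A → List A} {X : ℕ → A} {u r s : List A} {w : List (List A)}
  {τu τu' σu : List A → List (List A)}

lemma RetSub.flatten_wordApply (hτu : RetSub τ X u τu) (hw : ∀ r ∈ w, r ∈ ReturnWords X u) :
    (∀ s ∈ wordApply τu w, s ∈ ReturnWords X u) ∧
      (wordApply τu w).flatten = wordApply τ w.flatten := by
  induction w with
  | nil => simp
  | cons r w ih =>
    obtain ⟨hr₁, hr₂⟩ := hτu r (hw r (by simp))
    obtain ⟨ih₁, ih₂⟩ := ih fun s hs => hw s (by simp [hs])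
    refine ⟨fun s hs => ?_, ?_⟩
    · rcases List.mem_append.1 hs with hs | hs
      exacts [hr₁ s hs, ih₁ s hs]
    · rw [wordApply_cons, List.flatten_append, hr₂, ih₂, List.flatten_cons, wordApply_append]

lemma retSub_mPow (hτu : RetSub τ X u τu) (k : ℕ) : RetSub (mPow τ k) X u (mPow τu k) := by
  induction k with
  | zero => intro r hr; simp [mPow, hr, wordApply]
  | succ k ih =>
    intro r hr
    rw [wordApply_mPow_succ, ← (ih r hr).2]
    exact hτu.flatten_wordApply (ih r hr).1

lemma exists_occursAt_wordApply_append (hσ : IsFixedPt σ X) (hu : u <+: wordApply σ u)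
    (hr : r ∈ ReturnWords X u) :
    ∃ j, OccursAt X u j ∧ OccursAt X (wordApply σ r ++ u) j := by
  obtain ⟨i, hi, hri⟩ := exists_occursAt_append_of_mem_returnWords hr
  exact ⟨_, by simpa using hσ.occursAt_wordApply_append hu (w := []) (by simpa using hi),
    hσ.occursAt_wordApply_append hu hri⟩

lemma RetSub.eq_of_retSub (hinf : (Set.ofPred (OccursAt X u)).Infinite) (hτ : IsFixedPt τ X)
    (hu : u <+: wordApply τ u) (hτu : RetSub τ X u τu) (hτu' : RetSub τ X u τu')
    (hr : r ∈ ReturnWords X u) : τu' r = τu r := by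
  obtain ⟨j, hj, h⟩ := exists_occursAt_wordApply_append hτ hu hr
  refine eq_of_flatten_eq hinf (hτu' r hr).1 (hτu r hr).1 ?_ hj ?_
  · rw [(hτu' r hr).2, (hτu r hr).2]
  · rwa [(hτu' r hr).2]

open Classical in
noncomputable def returnSubst (τ : A → List A) (X : ℕ → A) (u : List A) (r : List A) :
    List (List A) :=
  if h : ∃ l : List (List A), (∀ s ∈ l, s ∈ ReturnWords X u) ∧ l.flatten = wordApply τ r
  then h.choose else []

lemma retSub_returnSubst (hinf : (Set.ofPred (OccursAt X u)).Infinite) (hτ : IsFixedPt τ X)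
    (hu : u <+: wordApply τ u) : RetSub τ X u (returnSubst τ X u) := fun r hr => by
  obtain ⟨j, hj, h⟩ := exists_occursAt_wordApply_append hτ hu hr
  have hex := exists_flatten_eq hinf hj h
  rw [returnSubst, dif_pos hex]
  exact hex.choose_spec

lemma RetSub.isFixedPt (hinf : (Set.ofPred (OccursAt X u)).Infinite) (hpre : IsPrefix X u)
    (hτ : IsFixedPt τ X) (hu : u <+: wordApply τ u) (hτu : RetSub τ X u τu) :
    IsFixedPt τu (derivedSeq X u) := fun n => by
  obtain ⟨hmem, hflat⟩ := hτu.flatten_wordApply fun r =>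
    mem_returnWords_of_mem_word (derivedSeq_mem_returnWords hinf) (m := 0) (c := n)
  have hpos : OccursAt X (word X 0 (occPos X u n) ++ u) 0 := by
    simpa using occursAt_word_append (Nat.zero_le _) (occursAt_occPos hinf n)
  refine (eq_word_derivedSeq hinf hmem ?_).symm
  rw [hflat, flatten_word_derivedSeq hinf, Nat.zero_add, occPos_zero hpre, Nat.sub_zero]
  simpa using hτ.occursAt_wordApply_append hu hpos

lemma RetSub.mem_of_infix (hinf : (Set.ofPred (OccursAt X u)).Infinite) (hσ : IsFixedPt σ X)
    (hu : u <+: wordApply σ u) (hσu : RetSub σ X u σu) (hr : r ∈ ReturnWords X u)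
    (hs : s ∈ ReturnWords X u) (h : s ++ u <:+: wordApply σ r) : s ∈ σu r := by
  obtain ⟨j, hj, hσr⟩ := exists_occursAt_wordApply_append hσ hu hr
  obtain ⟨m, rfl⟩ := exists_occPos_eq hj
  obtain ⟨hmem, hflat⟩ := hσu r hr
  have hσu_eq := eq_word_derivedSeq hinf hmem (by rwa [hflat])
  have hlen := length_flatten_word_derivedSeq hinf m (σu r).length
  rw [← hσu_eq, hflat] at hlen
  obtain ⟨q, hq, hsq⟩ := (hσr.of_prefix (List.prefix_append _ _)).of_infix h
  obtain ⟨n, hn, rfl⟩ := exists_derivedSeq_eq_of_occursAt hinf hs hsq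
  have hmono := occPos_strictMono hinf
  have hmn : m ≤ n := hmono.le_iff_le.1 (by omega)
  have hnc : n + 1 ≤ m + (σu r).length := by
    refine hmono.le_iff_le.1 ?_
    have := hmono.monotone (Nat.le_add_right m (σu r).length)
    simp only [derivedSeq, List.length_append, word_length] at hq
    omega
  rw [hσu_eq]
  exact mem_word.2 ⟨n - m, by omega, by rw [Nat.add_sub_cancel' hmn]⟩

end ReturnSubstitution

section Primitive

variable {τ σ : A → List A} {X : ℕ → A} {a : A} {u v w : List A}
  {τu : List A → List (List A)}

lemma Primitive.finite (hτ : Primitive τ) : Finite A := by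
  obtain ⟨k, -, hk⟩ := hτ
  rcases isEmpty_or_nonempty A with hA | ⟨⟨a⟩⟩
  · infer_instance
  · exact Set.finite_univ_iff.1 ((List.finite_toSet (mPow τ k a)).subset fun b _ => hk a b)

lemma exists_mPow_eq_cons (hhead : (τ a).head? = some a) (m : ℕ) :
    ∃ t, mPow τ m a = a :: t := by
  obtain ⟨t₀, ht₀⟩ := List.head?_eq_some_iff.1 hhead
  induction m with
  | zero => exact ⟨[], rfl⟩
  | succ m ih =>
    obtain ⟨t, ht⟩ := ih
    exact ⟨t₀ ++ wordApply τ t, by rw [mPow_succ, ht, wordApply_cons, ht₀, List.cons_append]⟩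

/-- Either `τ a = [a]`, and primitivity collapses the alphabet to `{a}`, or `τ a` has length
at least `2` and, since every `τ^m a` begins with `a`, each iteration adds a letter. -/
lemma tendsto_length_mPow_or_subsingleton (hne : Nonerasing τ)
    (hhead : (τ a).head? = some a) (hprim : Primitive τ) :
    Tendsto (fun m => (mPow τ m a).length) atTop atTop ∨ Subsingleton A := by
  by_cases hτa : τ a = [a]
  · right
    obtain ⟨k, -, hk⟩ := hprim
    have hpow : ∀ m, mPow τ m a = [a] := fun m => by
      induction m with
      | zero => rfl
      | succ m ih => rw [mPow_succ, ih, wordApply_singleton, hτa]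
    have hmem : ∀ b, b = a := fun b => by simpa [hpow] using hk a b
    exact ⟨fun b c => (hmem b).trans (hmem c).symm⟩
  · left
    obtain ⟨t₀, ht₀⟩ := List.head?_eq_some_iff.1 hhead
    have ht₀ne : t₀ ≠ [] := by rintro rfl; exact hτa ht₀
    refine tendsto_atTop_mono (fun m => ?_) tendsto_id
    induction m with
    | zero => simp
    | succ m ih =>
      obtain ⟨t, ht⟩ := exists_mPow_eq_cons hhead m
      have := List.length_pos_iff.2 ht₀ne
      have := length_le_length_wordApply hne t
      rw [ht] at ih
      rw [mPow_succ, ht, wordApply_cons, ht₀]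
      simp only [id, List.cons_append, List.length_cons, List.length_append] at ih ⊢
      omega

lemma eventually_infix_mPow (hτ : IsFixedPt τ X) (hX0 : X 0 = a)
    (hgrow : Tendsto (fun m => (mPow τ m a).length) atTop atTop) {i : ℕ}
    (h : OccursAt X w i) : ∀ᶠ m in atTop, w <:+: mPow τ m a :=
  (hgrow.eventually_ge_atTop (i + w.length)).mono fun m hm =>
    infix_of_occursAt h (occursAt_mPow hτ hX0 m) hm

lemma infix_mPow_add {b : A} {k m : ℕ} (hk : a ∈ mPow τ k b) (h : w <:+: mPow τ m a) :
    w <:+: mPow τ (m + k) b :=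
  h.trans (by rw [mPow_add]; exact infix_wordApply_of_mem _ hk)

/-- If `v` is a factor of every `σ b`, then `v` occurs in each window of length `2 M`: the
window starting in the block `σ (X t)` contains the whole next block `σ (X (t + 1))`. -/
lemma exists_occursAt_window (hσ : IsFixedPt σ X) (hne : Nonerasing σ) {M : ℕ}
    (hv : ∀ b, v <:+: σ b) (hM : ∀ b, (σ b).length ≤ M) (i : ℕ) :
    ∃ j, i < j ∧ j ≤ i + 2 * M ∧ OccursAt X v j := by
  set P : ℕ → ℕ := fun t => (wordApply σ (word X 0 t)).length with hPdef
  have hP : ∀ t, P (t + 1) = P t + (σ (X t)).length := fun t => by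
    simp [hPdef, word_append, word_one, wordApply_append]
  have hex : ∃ t, i < P (t + 1) :=
    ⟨i, lt_of_lt_of_le (by simp) (length_le_length_wordApply hne (word X 0 (i + 1)))⟩
  obtain ⟨t, ht, hmin⟩ : ∃ t, i < P (t + 1) ∧ ∀ s < t, ¬ i < P (s + 1) :=
    ⟨Nat.find hex, Nat.find_spec hex, fun s hs => Nat.find_min hex hs⟩
  have hlow : P t ≤ i := by
    cases t with
    | zero => simp [hPdef]
    | succ s => exact not_lt.1 (hmin s s.lt_succ_self)
  have hblock : OccursAt X (σ (X (t + 1))) (P (t + 1)) := by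
    simpa using hσ.occursAt_wordApply (w := [X (t + 1)]) (occursAt_word X (t + 1) 1)
  obtain ⟨q, hq, hocc⟩ := hblock.of_infix (hv _)
  have := hM (X t)
  have := hM (X (t + 1))
  have := hP t
  exact ⟨P (t + 1) + q, by omega, by omega, hocc⟩

lemma unifRec_of_primitive (hne : Nonerasing τ) (hhead : (τ a).head? = some a)
    (hprim : Primitive τ) (hX0 : X 0 = a) (hτ : IsFixedPt τ X) : UnifRec X := by
  rintro w ⟨i, hi⟩
  rcases tendsto_length_mPow_or_subsingleton hne hhead hprim with hgrow | hA
  · have := hprim.finite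
    obtain ⟨k, -, hk⟩ := hprim
    obtain ⟨m, hm⟩ := (eventually_infix_mPow hτ hX0 hgrow hi).exists
    obtain ⟨M, hM⟩ := (Set.finite_range fun b => (mPow τ (m + k) b).length).bddAbove
    refine ⟨2 * M, fun i => ?_⟩
    obtain ⟨j, h₁, h₂, h₃⟩ := exists_occursAt_window (isFixedPt_mPow hτ _) (nonerasing_mPow hne _)
      (fun b => infix_mPow_add (hk b a) hm) (fun b => hM ⟨b, rfl⟩) i
    exact ⟨j, h₁.le, h₂, h₃⟩
  · exact ⟨0, fun j => ⟨j, le_rfl, by omega, eq_of_length_eq_of_subsingleton (word_length _ _ _)⟩⟩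

lemma UnifRec.infinite_occursAt (hX : UnifRec X) (hu : IsFactor X u) :
    (Set.ofPred (OccursAt X u)).Infinite := by
  obtain ⟨g, hg⟩ := hX u hu
  refine Set.infinite_of_forall_exists_gt fun i => ?_
  obtain ⟨j, h₁, -, h₂⟩ := hg (i + 1)
  exact ⟨j, h₂, h₁⟩

lemma UnifRec.finite_returnWords [Finite A] (hX : UnifRec X) (hu : IsFactor X u) :
    (ReturnWords X u).Finite := by
  obtain ⟨g, hg⟩ := hX u hu
  refine (List.finite_length_le A (g + 1)).subset ?_
  rintro r ⟨i, j, -, -, hij, hgap, rfl⟩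
  obtain ⟨k, h₁, h₂, h₃⟩ := hg (i + 1)
  have : j ≤ k := not_lt.1 fun h => hgap k (by omega) h h₃
  simp only [Set.mem_ofPred_eq, word_length]
  omega

lemma primitiveOn_of_subsingleton [Subsingleton A] (hne : Nonerasing τ)
    (hτu : RetSub τ X u τu) : PrimitiveOn τu (ReturnWords X u) := by
  have hocc : ∀ i, OccursAt X u i := fun i =>
    eq_of_length_eq_of_subsingleton (word_length _ _ _)
  have hlen : ∀ r ∈ ReturnWords X u, r.length = 1 := by
    rintro r ⟨i, j, -, -, hij, hgap, rfl⟩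
    have : j ≤ i + 1 := not_lt.1 fun h => hgap (i + 1) (by omega) h (hocc _)
    simp only [word_length]
    omega
  refine ⟨1, one_pos, fun r hr s hs => ?_⟩
  obtain ⟨hmem, hflat⟩ := hτu r hr
  obtain ⟨t, ht⟩ := List.exists_mem_of_ne_nil (τu r) fun h => by
    rw [h] at hflat
    exact wordApply_ne_nil hne (ne_nil_of_mem_returnWords hr) hflat.symm
  rw [mPow_one, ← eq_of_length_eq_of_subsingleton ((hlen t (hmem t ht)).trans (hlen s hs).symm)]
  exact ht

lemma primitiveOn_of_tendsto (hne : Nonerasing τ) (hX0 : X 0 = a) (hτ : IsFixedPt τ X)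
    (hu : u ≠ []) (hpre : IsPrefix X u) (hinf : (Set.ofPred (OccursAt X u)).Infinite)
    (hgrow : Tendsto (fun m => (mPow τ m a).length) atTop atTop)
    (hfin : (ReturnWords X u).Finite) (hτu : RetSub τ X u τu) :
    PrimitiveOn τu (ReturnWords X u) := by
  have hev : ∀ᶠ m in atTop, ∀ s ∈ ReturnWords X u, s ++ u <:+: mPow τ m a :=
    (eventually_all_finite hfin).2 fun s hs => by
      obtain ⟨i, -, hi⟩ := exists_occursAt_append_of_mem_returnWords hs
      exact eventually_infix_mPow hτ hX0 hgrow hi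
  obtain ⟨m, hm, hpos⟩ := (hev.and (eventually_gt_atTop 0)).exists
  refine ⟨m, hpos, fun r hr s hs => (retSub_mPow hτu m).mem_of_infix hinf (isFixedPt_mPow hτ m)
    (prefix_wordApply_self (isFixedPt_mPow hτ m) (nonerasing_mPow hne m) hpre) hr hs
    ((hm s hs).trans ?_)⟩
  exact infix_wordApply_of_mem _ (hX0 ▸ head_mem_of_mem_returnWords hu hpre hr)

end Primitive

theorem stmt6 {A : Type*} (τ : A → List A) (a : A) (X : ℕ → A)
    (hne : Nonerasing τ) (hhead : (τ a).head? = some a) (hprim : Primitive τ)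
    (hX0 : X 0 = a) (hfix : IsFixedPt τ X)
    (u : List A) (hu : u ≠ []) (hpre : IsPrefix X u) :
    ∃ τu : List A → List (List A),
      RetSub τ X u τu ∧
      PrimitiveOn τu (ReturnWords X u) ∧
      (∃ D : ℕ → List A, IsDerived X u D) ∧
      (∀ D : ℕ → List A, IsDerived X u D → IsFixedPt τu D) ∧
      (∀ τu' : List A → List (List A), RetSub τ X u τu' →
        ∀ r ∈ ReturnWords X u, τu' r = τu r) := by
  have hX := unifRec_of_primitive hne hhead hprim hX0 hfix
  have hinf := hX.infinite_occursAt ⟨0, hpre⟩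
  have huτ : u <+: wordApply τ u := prefix_wordApply_self hfix hne hpre
  have hret := retSub_returnSubst hinf hfix huτ
  have hprimOn : PrimitiveOn (returnSubst τ X u) (ReturnWords X u) := by
    rcases tendsto_length_mPow_or_subsingleton hne hhead hprim with hgrow | hA
    · have := hprim.finite
      exact primitiveOn_of_tendsto hne hX0 hfix hu hpre hinf hgrow
        (hX.finite_returnWords ⟨0, hpre⟩) hret
    · exact primitiveOn_of_subsingleton hne hret
  refine ⟨returnSubst τ X u, hret, hprimOn, ⟨_, isDerived_derivedSeq hinf hpre⟩,
    fun D hD => ?_, fun τu' h' r hr => hret.eq_of_retSub hinf hfix huτ h' hr⟩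
  rw [eq_derivedSeq_of_isDerived hinf hpre hD]
  exact hret.isFixedPt hinf hpre hfix huτ

end Cobham
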